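/- arXiv:2209.13368 — 8 statements merged into one kernel-verified Lean document; each statement's English description precedes it below -/
import Mathlib

section
/- Let T be a bounded Hilbert space operator satisfying T*² − 2T*T + T² = 0 (i.e., T is 2-symmetric). Then T is self-adjoint. Consequently, if a commuting d-tuple A = (A_1,...,A_d) of Hilbert space operators satisfies δ²_{A*,A}(I) = 0, then Σ_{i=1}^d A_i is self-adjoint. -/
/-!
With `d = T* - T`, the 2-symmetry identity says exactly `d T - T d = d²`. Iterating,
`dⁿ T - T dⁿ = n dⁿ⁺¹`, so `n ‖dⁿ⁺¹‖ ≤ 2 ‖dⁿ‖ ‖T‖`. Since `d` is skew-adjoint, hence normal,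
`‖dⁿ‖ = ‖d‖ⁿ`, which gives `n ‖d‖ ≤ 2 ‖T‖` for all `n`; thus `d = 0`.
-/

open ContinuousLinearMap

theorem pow_mul_eq_mul_pow_add_nsmul_pow_succ {R : Type*} [Semiring R] {d t : R}
    (h : d * t = t * d + d * d) (n : ℕ) : d ^ n * t = t * d ^ n + n • d ^ (n + 1) := by
  induction n with
  | zero => simp
  | succ n ih =>
    calc d ^ (n + 1) * t = (d ^ n * t) * d + d ^ (n + 2) := by
          rw [pow_succ, mul_assoc, h, mul_add, ← mul_assoc, ← mul_assoc, ← pow_succ, ← pow_succ]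
      _ = t * d ^ (n + 1) + (n + 1) • d ^ (n + 2) := by
          rw [ih, add_mul, smul_mul_assoc, mul_assoc, ← pow_succ, ← pow_succ, succ_nsmul,
            add_assoc]

theorem nat_mul_norm_pow_succ_le {R : Type*} [NormedRing R] [NormedSpace ℝ R] {d t : R}
    (h : d * t = t * d + d * d) (n : ℕ) : n * ‖d ^ (n + 1)‖ ≤ 2 * ‖d ^ n‖ * ‖t‖ :=
  calc (n : ℝ) * ‖d ^ (n + 1)‖ = ‖d ^ n * t - t * d ^ n‖ := by
        rw [pow_mul_eq_mul_pow_add_nsmul_pow_succ h, add_sub_cancel_left, RCLike.norm_nsmul ℝ,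
          nsmul_eq_mul]
    _ ≤ ‖d ^ n‖ * ‖t‖ + ‖t‖ * ‖d ^ n‖ :=
        (norm_sub_le _ _).trans (add_le_add (norm_mul_le _ _) (norm_mul_le _ _))
    _ = 2 * ‖d ^ n‖ * ‖t‖ := by ring

section CStarAlgebra

variable {A : Type*} [CStarAlgebra A]

theorem IsStarNormal.norm_pow (a : A) [IsStarNormal a] {n : ℕ} (hn : n ≠ 0) :
    ‖a ^ n‖ = ‖a‖ ^ n := by
  rcases subsingleton_or_nontrivial A with _ | _
  · simp [Subsingleton.elim a 0, zero_pow hn]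
  refine le_antisymm (norm_pow_le' a (Nat.pos_of_ne_zero hn)) ?_
  have h := (spectrum.spectralRadius_pow_le (𝕜 := ℂ) a n hn).trans
    (spectrum.spectralRadius_le_nnnorm (a ^ n))
  rw [IsStarNormal.spectralRadius_eq_nnnorm] at h
  exact_mod_cast h

theorem IsStarNormal.eq_zero_of_mul_eq_mul_add_mul_self {d t : A} [IsStarNormal d]
    (h : d * t = t * d + d * d) : d = 0 := by
  by_contra hd
  have hpos : 0 < ‖d‖ := norm_pos_iff.mpr hd
  have hbound (n : ℕ) : (n + 1) * ‖d‖ ≤ 2 * ‖t‖ := by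
    have := nat_mul_norm_pow_succ_le h (n + 1)
    rw [norm_pow d (by omega), norm_pow d (by omega), pow_succ] at this
    push_cast at this
    exact le_of_mul_le_mul_right (by linarith) (pow_pos hpos (n + 1))
  obtain ⟨n, hn⟩ := exists_nat_gt (2 * ‖t‖ / ‖d‖)
  have := (div_lt_iff₀ hpos).mp hn
  linarith [hbound n]

def IsTwoSymmetric (a : A) : Prop :=
  star a * star a - (2 : ℂ) • (star a * a) + a * a = 0

theorem IsTwoSymmetric.isSelfAdjoint {a : A} (h : IsTwoSymmetric a) : IsSelfAdjoint a := by
  set d := star a - a with hd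
  have hskew : star d = -d := by simp [d]
  have : IsStarNormal d := ⟨by rw [hskew]; exact (Commute.refl d).neg_left⟩
  have hcomm : d * a = a * d + d * d := by
    rw [IsTwoSymmetric] at h
    rw [← sub_eq_zero, ← neg_eq_zero, ← h, two_smul, hd]
    noncomm_ring
  exact sub_eq_zero.mp (IsStarNormal.eq_zero_of_mul_eq_mul_add_mul_self hcomm)

end CStarAlgebra

theorem stmt6 {H : Type*} [NormedAddCommGroup H] [InnerProductSpace ℂ H] [CompleteSpace H]
    (T : H →L[ℂ] H)
    (hT : adjoint T * adjoint T - (2 : ℂ) • (adjoint T * T) + T * T = 0) :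
    IsSelfAdjoint T ∧
      ∀ (d : ℕ) (A : Fin d → (H →L[ℂ] H)),
        (∀ i j, A i * A j = A j * A i) →
        (adjoint (∑ i, A i) * adjoint (∑ i, A i)
            - (2 : ℂ) • (adjoint (∑ i, A i) * (∑ i, A i))
            + (∑ i, A i) * (∑ i, A i) = 0) →
        IsSelfAdjoint (∑ i, A i) := by
  have isTwoSymmetric_iff (S : H →L[ℂ] H) :
      IsTwoSymmetric S ↔ adjoint S * adjoint S - (2 : ℂ) • (adjoint S * S) + S * S = 0 := by
    rw [IsTwoSymmetric, star_eq_adjoint]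
  exact ⟨((isTwoSymmetric_iff T).mpr hT).isSelfAdjoint,
    fun _ A _ hA => ((isTwoSymmetric_iff (∑ i, A i)).mpr hA).isSelfAdjoint⟩
end

section
/- If T is a bounded Hilbert space operator with T*² − 2T*T + T² = 0, then TT* ≤ T*T, i.e., T is hyponormal. -/
/-!
Write `S = T*` and `B = T - T*`. The hypothesis `S² - 2ST + T² = 0` says exactly that
`B² = ⁅S, T⁆`, and then also `⁅S, B⁆ = B²`. Inductively `⁅S, Bⁿ⁆ = n Bⁿ⁺¹`, so
`n ‖Bⁿ⁺¹‖ ≤ 2 ‖S‖ ‖Bⁿ‖`. Since `B` is skew-adjoint, hence normal, `‖Bⁿ‖ = ‖B‖ⁿ`, which leaves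
`n ‖B‖ ≤ 2 ‖S‖` for all `n`. So `B = 0`: `T` is self-adjoint, and `T*T - TT* = 0`.
-/

open ContinuousLinearMap

theorem lie_pow_eq_nsmul_pow_succ_of_lie_eq_sq {R : Type*} [Ring R] {a b : R}
    (h : ⁅a, b⁆ = b ^ 2) (n : ℕ) : ⁅a, b ^ n⁆ = n • b ^ (n + 1) := by
  induction n with
  | zero => simp [Ring.lie_def]
  | succ n ih =>
    have leibniz : ⁅a, b ^ (n + 1)⁆ = ⁅a, b ^ n⁆ * b + b ^ n * ⁅a, b⁆ := by
      simp only [Ring.lie_def, pow_succ]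
      noncomm_ring
    rw [leibniz, ih, h, smul_mul_assoc, ← pow_succ, ← pow_add, succ_nsmul]

theorem sub_sq_eq_lie_of_sq_sub_two_mul_add_sq_eq_zero {R : Type*} [Ring R] {s t : R}
    (h : s * s - (s * t + s * t) + t * t = 0) : (t - s) ^ 2 = ⁅s, t⁆ := by
  rw [Ring.lie_def, ← sub_eq_zero, ← h]
  noncomm_ring

section CStarAlgebra

variable {A : Type*} [CStarAlgebra A]

theorem IsStarNormal.nnnorm_pow_succ (a : A) [IsStarNormal a] (n : ℕ) :
    ‖a ^ (n + 1)‖₊ = ‖a‖₊ ^ (n + 1) := by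
  refine le_antisymm (nnnorm_pow_le' a n.succ_pos) ?_
  nontriviality A
  have h := spectrum.spectralRadius_le_pow_nnnorm_pow_one_div ℂ a n
  rw [IsStarNormal.spectralRadius_eq_nnnorm, nnnorm_one, ENNReal.coe_one, ENNReal.one_rpow,
    mul_one] at h
  have h' := ENNReal.rpow_le_rpow h (z := (n : ℝ) + 1) (by positivity)
  rw [← ENNReal.rpow_mul, one_div, inv_mul_cancel₀ (by positivity), ENNReal.rpow_one,
    ← Nat.cast_succ, ENNReal.rpow_natCast] at h'
  exact_mod_cast h'

theorem IsStarNormal.norm_pow_succ (a : A) [IsStarNormal a] (n : ℕ) :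
    ‖a ^ (n + 1)‖ = ‖a‖ ^ (n + 1) :=
  congr($(IsStarNormal.nnnorm_pow_succ a n))

theorem IsStarNormal.eq_zero_of_lie_eq_sq {a b : A} [IsStarNormal b] (h : ⁅a, b⁆ = b ^ 2) :
    b = 0 := by
  have growth (n : ℕ) : ((n : ℝ) + 1) * ‖b‖ * ‖b‖ ^ (n + 1) ≤ 2 * ‖a‖ * ‖b‖ ^ (n + 1) :=
    calc ((n : ℝ) + 1) * ‖b‖ * ‖b‖ ^ (n + 1) = ‖(n + 1) • b ^ (n + 2)‖ := by
          rw [RCLike.norm_nsmul ℂ, nsmul_eq_mul, IsStarNormal.norm_pow_succ]; push_cast; ring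
      _ = ‖a * b ^ (n + 1) - b ^ (n + 1) * a‖ := by
          rw [← Ring.lie_def, lie_pow_eq_nsmul_pow_succ_of_lie_eq_sq h]
      _ ≤ ‖a‖ * ‖b ^ (n + 1)‖ + ‖b ^ (n + 1)‖ * ‖a‖ :=
          (norm_sub_le _ _).trans (add_le_add (norm_mul_le _ _) (norm_mul_le _ _))
      _ = 2 * ‖a‖ * ‖b‖ ^ (n + 1) := by rw [IsStarNormal.norm_pow_succ]; ring
  by_contra hb
  have hpos : 0 < ‖b‖ := norm_pos_iff.mpr hb
  obtain ⟨n, hn⟩ := exists_nat_gt (2 * ‖a‖ / ‖b‖)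
  have hle : ((n : ℝ) + 1) * ‖b‖ ≤ 2 * ‖a‖ := le_of_mul_le_mul_right (growth n) (by positivity)
  rw [div_lt_iff₀ hpos] at hn
  linarith

end CStarAlgebra

theorem stmt7 {H : Type*} [NormedAddCommGroup H] [InnerProductSpace ℂ H] [CompleteSpace H]
    (T : H →L[ℂ] H)
    (hT : adjoint T * adjoint T - (2 : ℂ) • (adjoint T * T) + T * T = 0) :
    (adjoint T * T - T * adjoint T).IsPositive := by
  set S := adjoint T
  have hsq : (T - S) ^ 2 = ⁅S, T⁆ :=
    sub_sq_eq_lie_of_sq_sub_two_mul_add_sq_eq_zero (by rwa [two_smul] at hT)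
  have hnormal : IsStarNormal (T - S) := by
    have hskew : star (T - S) = -(T - S) := by
      rw [star_sub, star_eq_adjoint, star_eq_adjoint, adjoint_adjoint, neg_sub]
    exact ⟨by rw [hskew]; exact (Commute.refl _).neg_left⟩
  have hlie : ⁅S, T - S⁆ = (T - S) ^ 2 := by
    rw [hsq, Ring.lie_def, Ring.lie_def]
    noncomm_ring
  have hself : T - S = 0 := IsStarNormal.eq_zero_of_lie_eq_sq hlie
  have hcomm : S * T - T * S = 0 := by
    rw [← Ring.lie_def, ← hsq, hself, zero_pow two_ne_zero]
  rw [hcomm]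
  exact isPositive_zero
end

section
/- Let A = (A_1,...,A_d) be a commuting d-tuple of bounded Hilbert space operators and suppose λ = (λ_1,...,λ_d) belongs to the joint approximate point spectrum of A, witnessed by unit vectors x_n with ‖(A_i − λ_i)x_n‖ → 0 for all i. If δ^m_{A*,A}(I) = 0, then (Σ_{i=1}^d conj(λ_i) − Σ_{i=1}^d λ_i)^m = 0, hence Σ_{i=1}^d λ_i is real. -/
open ContinuousLinearMap Filter Topology

/-! Summing the relations `A i xₙ - λᵢ xₙ → 0` makes `xₙ` an approximate eigenvector of
`S = ∑ A i` for `μ = ∑ λᵢ`, hence of `S ^ k` for `μ ^ k`. Pairing `δᵐ(I) xₙ` with `xₙ`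
gives `∑ⱼ cⱼ ⟪S^(m-j) xₙ, S^j xₙ⟫`, which is `0` for every `n` but tends to
`∑ⱼ cⱼ conj μ^(m-j) μ^j = (conj μ - μ)^m`. As `m > 0`, `conj μ = μ`. -/

theorem sub_pow_eq_sum_neg_one_pow_mul_choose {R : Type*} [CommRing R] (a b : R) (m : ℕ) :
    (b - a) ^ m =
      ∑ j ∈ Finset.range (m + 1), (-1) ^ j * (m.choose j : R) * (b ^ (m - j) * a ^ j) := by
  rw [sub_eq_neg_add, add_pow]
  refine Finset.sum_congr rfl fun j _ => ?_
  rw [neg_pow]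
  ring

section ApproxEigen

variable {𝕜 E : Type*} [NontriviallyNormedField 𝕜] [NormedAddCommGroup E] [NormedSpace 𝕜 E]

theorem tendsto_sum_apply_sub_sum_smul {ι : Type*} (s : Finset ι) (A : ι → E →L[𝕜] E)
    (lam : ι → 𝕜) {x : ℕ → E}
    (h : ∀ i ∈ s, Tendsto (fun n => A i (x n) - lam i • x n) atTop (𝓝 0)) :
    Tendsto (fun n => (∑ i ∈ s, A i) (x n) - (∑ i ∈ s, lam i) • x n) atTop (𝓝 0) := by
  simpa [sum_apply, Finset.sum_smul, ← Finset.sum_sub_distrib] using tendsto_finsetSum s h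

theorem tendsto_pow_apply_sub_pow_smul {T : E →L[𝕜] E} {μ : 𝕜} {x : ℕ → E}
    (h : Tendsto (fun n => T (x n) - μ • x n) atTop (𝓝 0)) (k : ℕ) :
    Tendsto (fun n => (T ^ k) (x n) - μ ^ k • x n) atTop (𝓝 0) := by
  induction k with
  | zero => simp
  | succ k ih =>
    have hT := (T.continuous.tendsto 0).comp ih
    rw [map_zero] at hT
    convert hT.add (h.const_smul (μ ^ k)) using 2 with n
    · rw [Function.comp_apply, pow_succ' T, mul_apply_eq_comp, pow_succ μ, mul_smul, map_sub,
        map_smul, smul_sub]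
      abel
    · simp

end ApproxEigen

section Inner

variable {H : Type*} [NormedAddCommGroup H] [InnerProductSpace ℂ H]

theorem tendsto_inner_apply_apply_of_tendsto_sub_smul {U V : H →L[ℂ] H} {α β : ℂ}
    {x : ℕ → H} (hx : ∀ n, ‖x n‖ = 1)
    (hU : Tendsto (fun n => U (x n) - α • x n) atTop (𝓝 0))
    (hV : Tendsto (fun n => V (x n) - β • x n) atTop (𝓝 0)) :
    Tendsto (fun n => inner ℂ (U (x n)) (V (x n))) atTop (𝓝 (starRingEnd ℂ α * β)) := by
  have hxx : ∀ n, inner ℂ (x n) (x n) = (1 : ℂ) := fun n => by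
    rw [inner_self_eq_norm_sq_to_K, hx n]; norm_num
  have split : ∀ n, inner ℂ (U (x n)) (V (x n)) - starRingEnd ℂ α * β
      = inner ℂ (U (x n) - α • x n) (V (x n))
        + starRingEnd ℂ α * inner ℂ (x n) (V (x n) - β • x n) := by
    intro n
    simp only [inner_sub_left, inner_sub_right, inner_smul_left, inner_smul_right, hxx]
    ring
  have bound : ∀ n, ‖inner ℂ (U (x n)) (V (x n)) - starRingEnd ℂ α * β‖
      ≤ ‖U (x n) - α • x n‖ * ‖V‖ + ‖α‖ * ‖V (x n) - β • x n‖ := by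
    intro n
    rw [split n]
    refine (norm_add_le _ _).trans (add_le_add ?_ ?_)
    · refine (norm_inner_le_norm _ _).trans (mul_le_mul_of_nonneg_left ?_ (norm_nonneg _))
      simpa [hx n] using V.le_opNorm (x n)
    · rw [norm_mul, RCLike.norm_conj]
      gcongr
      exact (norm_inner_le_norm _ _).trans_eq (by rw [hx n, one_mul])
  rw [← tendsto_sub_nhds_zero_iff]
  refine squeeze_zero_norm bound ?_
  simpa using ((tendsto_zero_iff_norm_tendsto_zero.mp hU).mul_const ‖V‖).add
    ((tendsto_zero_iff_norm_tendsto_zero.mp hV).const_mul ‖α‖)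

theorem inner_adjoint_pow_mul_pow_apply [CompleteSpace H] (T : H →L[ℂ] H) (a b : ℕ) (x : H) :
    inner ℂ x ((adjoint T ^ a * T ^ b) x) = inner ℂ ((T ^ a) x) ((T ^ b) x) := by
  rw [← star_eq_adjoint, ← star_pow, star_eq_adjoint, mul_apply_eq_comp, adjoint_inner_right]

theorem sub_pow_eq_zero_of_tendsto_apply_sub_smul [CompleteSpace H] {T : H →L[ℂ] H} {μ : ℂ}
    {x : ℕ → H} (hx : ∀ n, ‖x n‖ = 1) (hT : Tendsto (fun n => T (x n) - μ • x n) atTop (𝓝 0))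
    {m : ℕ}
    (hsym : ∑ j ∈ Finset.range (m + 1),
        ((-1 : ℂ) ^ j * (m.choose j : ℂ)) • ((adjoint T) ^ (m - j) * T ^ j) = 0) :
    (starRingEnd ℂ μ - μ) ^ m = 0 := by
  have hlim : Tendsto (fun n => inner ℂ (x n) ((∑ j ∈ Finset.range (m + 1),
        ((-1 : ℂ) ^ j * (m.choose j : ℂ)) • ((adjoint T) ^ (m - j) * T ^ j)) (x n)))
      atTop (𝓝 ((starRingEnd ℂ μ - μ) ^ m)) := by
    simp only [sum_apply, smul_apply, inner_sum, inner_smul_right,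
      inner_adjoint_pow_mul_pow_apply, sub_pow_eq_sum_neg_one_pow_mul_choose, ← map_pow]
    exact tendsto_finsetSum _ fun j _ => (tendsto_inner_apply_apply_of_tendsto_sub_smul hx
      (tendsto_pow_apply_sub_pow_smul hT _) (tendsto_pow_apply_sub_pow_smul hT _)).const_mul _
  simp only [hsym, zero_apply, inner_zero_right] at hlim
  exact tendsto_nhds_unique hlim tendsto_const_nhds

end Inner

theorem stmt8_general {H : Type*} [NormedAddCommGroup H] [InnerProductSpace ℂ H] [CompleteSpace H]
    {d : ℕ} (A : Fin d → (H →L[ℂ] H))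
    (lam : Fin d → ℂ) (x : ℕ → H)
    (hx : ∀ n, ‖x n‖ = 1)
    (hconv : ∀ i, Tendsto (fun n => ‖(A i) (x n) - lam i • x n‖) atTop (𝓝 0))
    (m : ℕ) (hm : 0 < m)
    (hsym : ∑ j ∈ Finset.range (m + 1),
        ((-1 : ℂ) ^ j * (m.choose j : ℂ)) •
          ((adjoint (∑ i, A i)) ^ (m - j) * (∑ i, A i) ^ j) = 0) :
    ((∑ i, (starRingEnd ℂ) (lam i)) - ∑ i, lam i) ^ m = 0 ∧
      ∃ r : ℝ, (∑ i, lam i) = (r : ℂ) := by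
  have hsum := tendsto_sum_apply_sub_sum_smul Finset.univ A lam fun i _ =>
    tendsto_zero_iff_norm_tendsto_zero.mpr (hconv i)
  have hpow := sub_pow_eq_zero_of_tendsto_apply_sub_smul hx hsum hsym
  rw [map_sum] at hpow
  refine ⟨hpow, (∑ i, lam i).re, ?_⟩
  rw [← map_sum, pow_eq_zero_iff hm.ne', sub_eq_zero] at hpow
  exact (Complex.conj_eq_iff_re.mp hpow).symm

theorem stmt8 {H : Type*} [NormedAddCommGroup H] [InnerProductSpace ℂ H] [CompleteSpace H]
    {d : ℕ} (A : Fin d → (H →L[ℂ] H))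
    (hA : ∀ i j, A i * A j = A j * A i)
    (lam : Fin d → ℂ) (x : ℕ → H)
    (hx : ∀ n, ‖x n‖ = 1)
    (hconv : ∀ i, Tendsto (fun n => ‖(A i) (x n) - lam i • x n‖) atTop (𝓝 0))
    (m : ℕ) (hm : 0 < m)
    (hsym : ∑ j ∈ Finset.range (m + 1),
        ((-1 : ℂ) ^ j * (m.choose j : ℂ)) •
          ((adjoint (∑ i, A i)) ^ (m - j) * (∑ i, A i) ^ j) = 0) :
    ((∑ i, (starRingEnd ℂ) (lam i)) - ∑ i, lam i) ^ m = 0 ∧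
      ∃ r : ℝ, (∑ i, lam i) = (r : ℂ) :=
  stmt8_general A lam x hx hconv m hm hsym
end

section
/- There exist a positive operator A, a unitary U, and an operator T on ℂ² such that Δ²_{T*,T}(A) = 0 but, with S = UT (or S defined via the unitary), Δ²_{S*,S}(A) ≠ 0. Concretely, with T = [[1,1],[0,1]], A = [[0,0],[0,1]], U = [[0,1],[i,0]], and S = UT, one has Δ²_{T*,T}(A) = A − 2T*AT + T*²AT² = 0 while Δ²_{S*,S}(A) ≠ 0. -/
/-!
The Jordan block `T` satisfies `Tᴴ A T = A`, i.e. it is an `A`-isometry, and every `A`-isometry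
is an `A`-2-isometry since `Tᴴ² A T² = Tᴴ (Tᴴ A T) T = A`. For `S = U T = !![0, 1; i, i]` the
`(0, 0)` entry of the defect is `A₀₀ - 2 |S₁₀|² + |(S²)₁₀|² = 0 - 2 + 1`, because `A` only sees the
second row.
-/

open Matrix
open scoped ComplexOrder

theorem Matrix.conjTranspose_fin_two {R : Type*} [Star R] (a b c d : R) :
    !![a, b; c, d]ᴴ = !![star a, star c; star b, star d] := by
  ext i j
  fin_cases i <;> fin_cases j <;> rfl

/-- The paper's `Δ²_{T*,T}(A)`. -/
def secondDefect {n R : Type*} [Fintype n] [DecidableEq n] [Ring R] [Star R]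
    (T A : Matrix n n R) : Matrix n n R :=
  A - (2 : R) • (Tᴴ * A * T) + Tᴴ ^ 2 * A * T ^ 2

theorem secondDefect_eq_zero_of_conjTranspose_mul_mul_eq {n R : Type*} [Fintype n]
    [DecidableEq n] [Ring R] [StarRing R] {T A : Matrix n n R} (hT : Tᴴ * A * T = A) :
    secondDefect T A = 0 := by
  have hT2 : Tᴴ ^ 2 * A * T ^ 2 = A := calc
    Tᴴ ^ 2 * A * T ^ 2 = Tᴴ * (Tᴴ * A * T) * T := by simp only [sq, Matrix.mul_assoc]
    _ = A := by rw [hT, hT]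
  rw [secondDefect, hT, hT2, two_smul]
  abel

theorem posSemidef_diag_zero_one : (!![0, 0; 0, 1] : Matrix (Fin 2) (Fin 2) ℂ).PosSemidef := by
  rw [← diagonal_vec2]
  exact PosSemidef.diagonal fun i => by fin_cases i <;> simp

theorem mem_unitaryGroup_swap_I : !![0, 1; Complex.I, 0] ∈ unitaryGroup (Fin 2) ℂ := by
  rw [mem_unitaryGroup_iff, star_eq_conjTranspose, conjTranspose_fin_two]
  simp [one_fin_two]

theorem jordan_conjTranspose_mul_mul :
    (!![1, 1; 0, 1] : Matrix (Fin 2) (Fin 2) ℂ)ᴴ * !![0, 0; 0, 1] * !![1, 1; 0, 1] =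
      !![0, 0; 0, 1] := by
  rw [conjTranspose_fin_two, mul_fin_two, mul_fin_two]
  simp

theorem swap_I_mul_jordan :
    (!![0, 1; Complex.I, 0] * !![1, 1; 0, 1] : Matrix (Fin 2) (Fin 2) ℂ) =
      !![0, 1; Complex.I, Complex.I] := by
  simp

theorem secondDefect_swap_I_mul_jordan_apply_zero_zero :
    secondDefect !![0, 1; Complex.I, Complex.I] (!![0, 0; 0, 1] : Matrix (Fin 2) (Fin 2) ℂ) 0 0
      = -1 := by
  simp [secondDefect, sq, conjTranspose_fin_two]
  norm_num

theorem stmt12 :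
    ∃ (A U T : Matrix (Fin 2) (Fin 2) ℂ),
      A.PosSemidef ∧ U ∈ Matrix.unitaryGroup (Fin 2) ℂ ∧
      A = !![0, 0; 0, 1] ∧ T = !![1, 1; 0, 1] ∧ U = !![0, 1; Complex.I, 0] ∧
      (A - (2 : ℂ) • (Tᴴ * A * T) + (Tᴴ) ^ 2 * A * T ^ 2 = 0) ∧
      ¬ (A - (2 : ℂ) • ((U * T)ᴴ * A * (U * T)) + ((U * T)ᴴ) ^ 2 * A * (U * T) ^ 2 = 0) := by
  refine ⟨!![0, 0; 0, 1], !![0, 1; Complex.I, 0], !![1, 1; 0, 1], posSemidef_diag_zero_one,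
    mem_unitaryGroup_swap_I, rfl, rfl, rfl,
    secondDefect_eq_zero_of_conjTranspose_mul_mul_eq jordan_conjTranspose_mul_mul, ?_⟩
  change secondDefect (!![0, 1; Complex.I, 0] * !![1, 1; 0, 1]) !![0, 0; 0, 1] ≠ 0
  rw [swap_I_mul_jordan]
  intro h
  simpa [h] using secondDefect_swap_I_mul_jordan_apply_zero_zero
end

section
/- Let A = (A_1,...,A_d), B = (B_1,...,B_d) be commuting d-tuples of bounded operators and X a bounded operator such that X − A_i X B_i = 0 for each 1 ≤ i ≤ d−1 (each pair (A_i,B_i) is (X,1)-isometric). Then Δ^m_{A,B}(X) = 0 if and only if ((d−2)I + L_{A_d}R_{B_d})^m(X) = 0, where L_{A_d}R_{B_d}(Y) = A_d Y B_d. -/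
/-!
On the subspace of operators `Y` fixed by every `Y ↦ Aᵢ Y Bᵢ` with `i < d`, the sum `Λ(Y)` collapses
to `d Y + A_d Y B_d`, so `I - Λ` agrees with `-((d - 1) I + L_{A_d} R_{B_d})` there. By commutativity
`Y ↦ A_d Y B_d` preserves that subspace, which contains `X`, so the two iterates at `X` differ only
by the sign `(-1)^m`.
-/

open Set Function

theorem Set.EqOn.iterate_of_mapsTo {α : Type*} {f g : α → α} {s : Set α} (h : EqOn f g s)
    (hg : MapsTo g s s) (n : ℕ) : EqOn f^[n] g^[n] s := by
  induction n with
  | zero => exact fun _ _ => rfl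
  | succ n ih =>
    intro x hx
    rw [iterate_succ_apply, iterate_succ_apply, h hx]
    exact ih (hg hx)

theorem iterate_eq_zero_iff_of_eqOn_neg {M : Type*} [AddGroup M] (S : AddSubgroup M)
    {f g : M → M} (hg : ∀ y, g (-y) = -g y) (hgS : MapsTo g S S) (hfg : EqOn f (-g) S)
    {x : M} (hx : x ∈ S) (n : ℕ) : f^[n] x = 0 ↔ g^[n] x = 0 := by
  have hmaps : MapsTo (-g) S S := fun y hy => S.neg_mem (hgS hy)
  rw [hfg.iterate_of_mapsTo hmaps n hx]
  change (Neg.neg ∘ g)^[n] x = 0 ↔ _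
  rw [Function.Commute.comp_iterate (fun y => (hg y).symm)]
  exact (neg_injective.iterate n).eq_iff' (iterate_fixed neg_zero n)

theorem mul_mul_mul_comm_of_commute {R : Type*} [Semigroup R] {a a' b b' : R} (ha : Commute a a')
    (hb : Commute b b') (Y : R) : a * (a' * Y * b') * b = a' * (a * Y * b) * b' := by
  simp only [← mul_assoc, ha.eq]
  simp only [mul_assoc, hb.eq]

section

variable {𝕜 R ι : Type*} [CommRing 𝕜] [Ring R] [Algebra 𝕜 R]

variable (𝕜) in
def jointFixedPoints (a b : ι → R) (s : Set ι) : Submodule 𝕜 R where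
  carrier := {Y | ∀ i ∈ s, a i * Y * b i = Y}
  add_mem' hY hZ i hi := by rw [mul_add, add_mul, hY i hi, hZ i hi]
  zero_mem' i _ := by rw [mul_zero, zero_mul]
  smul_mem' c Y hY i hi := by rw [mul_smul_comm, smul_mul_assoc, hY i hi]

theorem mul_mul_mem_jointFixedPoints {a b : ι → R} {s : Set ι} {c e Y : R}
    (ha : ∀ i ∈ s, Commute (a i) c) (hb : ∀ i ∈ s, Commute (b i) e)
    (hY : Y ∈ jointFixedPoints 𝕜 a b s) : c * Y * e ∈ jointFixedPoints 𝕜 a b s := fun i hi => by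
  rw [mul_mul_mul_comm_of_commute (ha i hi) (hb i hi), hY i hi]

theorem sum_mul_mul_of_mem_jointFixedPoints {d : ℕ} {a b : Fin (d + 1) → R} {Y : R}
    (hY : Y ∈ jointFixedPoints 𝕜 a b {Fin.last d}ᶜ) :
    ∑ i, a i * Y * b i = d • Y + a (Fin.last d) * Y * b (Fin.last d) := by
  have hfix (i : Fin d) : a i.castSucc * Y * b i.castSucc = Y :=
    hY _ (Set.mem_compl_singleton_iff.mpr (Fin.castSucc_lt_last i).ne)
  simp [Fin.sum_univ_castSucc, hfix]

theorem sub_sum_mul_mul_of_mem_jointFixedPoints {d : ℕ} {a b : Fin (d + 1) → R} {Y : R}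
    (hY : Y ∈ jointFixedPoints 𝕜 a b {Fin.last d}ᶜ) :
    Y - ∑ i, a i * Y * b i = -(((d : 𝕜) - 1) • Y + a (Fin.last d) * Y * b (Fin.last d)) := by
  rw [sum_mul_mul_of_mem_jointFixedPoints hY, ← Nat.cast_smul_eq_nsmul 𝕜]
  module

end

theorem stmt13_general {E : Type*} [NormedAddCommGroup E] [NormedSpace ℂ E]
    {d : ℕ} (A B : Fin (d + 1) → (E →L[ℂ] E))
    (hA : ∀ i j, A i * A j = A j * A i) (hB : ∀ i j, B i * B j = B j * B i)
    (X : E →L[ℂ] E) (m : ℕ)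
    (h1 : ∀ i : Fin (d + 1), i ≠ Fin.last d → X - A i * X * B i = 0) :
    ((fun Y => Y - ∑ i, A i * Y * B i)^[m] X = 0 ↔
      (fun Y => ((d : ℂ) - 1) • Y + A (Fin.last d) * Y * B (Fin.last d))^[m] X = 0) := by
  set S := jointFixedPoints ℂ A B {Fin.last d}ᶜ
  have hX : X ∈ S := fun i hi => (sub_eq_zero.mp (h1 i hi)).symm
  refine iterate_eq_zero_iff_of_eqOn_neg S.toAddSubgroup (fun Y => ?_) (fun Y hY => ?_)
    (fun Y hY => sub_sum_mul_mul_of_mem_jointFixedPoints hY) hX m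
  · simp only [smul_neg, mul_neg, neg_mul, neg_add]
  · exact S.add_mem (S.smul_mem _ hY)
      (mul_mul_mem_jointFixedPoints (fun i _ => hA i _) (fun i _ => hB i _) hY)

theorem stmt13 {E : Type*} [NormedAddCommGroup E] [NormedSpace ℂ E] [CompleteSpace E]
    {d : ℕ} (A B : Fin (d + 1) → (E →L[ℂ] E))
    (hA : ∀ i j, A i * A j = A j * A i) (hB : ∀ i j, B i * B j = B j * B i)
    (X : E →L[ℂ] E) (m : ℕ)
    (h1 : ∀ i : Fin (d + 1), i ≠ Fin.last d → X - A i * X * B i = 0) :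
    ((fun Y => Y - ∑ i, A i * Y * B i)^[m] X = 0 ↔
      (fun Y => ((d : ℂ) - 1) • Y + A (Fin.last d) * Y * B (Fin.last d))^[m] X = 0) :=
  stmt13_general A B hA hB X m h1
end

section
/- (Nilpotent perturbation, isometric part) Let A, B be commuting d-tuples of bounded operators with Δ^{m}_{A,B}(X) = 0, and let N_1, N_2 be commuting d-tuples that are n_1- and n_2-nilpotent respectively (all products of components of total degree n_i vanish), with [A, N_1] = [B, N_2] = 0 componentwise. Then Δ^{m+n_1+n_2−2}_{A+N_1, B+N_2}(X) = 0. -/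
/-!
Let `L_{a,b} X = ∑ i, a i * X * b i` be the elementary operator on the algebra of operators, so
that `Δ_{A,B} = 1 - L_{A,B}` and, by bilinearity,
`Δ_{A+N₁,B+N₂} = Δ_{A,B} - (L_{N₁,B+N₂} + L_{A,N₂})`.
Under the commutation hypotheses these three operators commute. Since left and right
multiplications commute, `L_{N₁,S} ^ n` is a sum of terms `X ↦ w X w'` with `w` a word of length
`n` in the entries of `N₁`; as these commute, such a word is a monomial of degree `n`, so
`L_{N₁,B+N₂} ^ n₁ = 0`, and symmetrically `L_{A,N₂} ^ n₂ = 0`. Hence the perturbation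
`U = L_{N₁,B+N₂} + L_{A,N₂}` satisfies `U ^ (n₁ + n₂ - 1) = 0`, so in the binomial expansion of
`(Δ_{A,B} - U) ^ (m + n₁ + n₂ - 2)` every term contains either `Δ_{A,B} ^ m`, which kills `X`,
or `U ^ (n₁ + n₂ - 1)`.
-/

/-- Δ_{A,B}(Y) = Y − Σ_i A_i Y B_i. -/
noncomputable def DeltaOp {E : Type*} [NormedAddCommGroup E] [NormedSpace ℂ E]
    {d : ℕ} (A B : Fin d → (E →L[ℂ] E)) : (E →L[ℂ] E) → (E →L[ℂ] E) :=
  fun Y => Y - ∑ i, A i * Y * B i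

/-- A commuting d-tuple N is n-nilpotent if every product of its entries of total degree n
vanishes. -/
def IsNilpotentTuple {E : Type*} [NormedAddCommGroup E] [NormedSpace ℂ E]
    {d : ℕ} (N : Fin d → (E →L[ℂ] E)) (n : ℕ) : Prop :=
  ∀ α : Fin d → ℕ, (∑ i, α i) = n → (List.ofFn fun i => (N i) ^ (α i)).prod = 0

open LinearMap

theorem Finset.sum_pow_eq_sum_prod_map_ofFn {R : Type*} [Semiring R] {ι : Type*} [Fintype ι]
    (a : ι → R) (n : ℕ) :
    (∑ i, a i) ^ n = ∑ f : Fin n → ι, ((List.ofFn f).map a).prod := by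
  induction n with
  | zero => simp
  | succ n ih =>
    rw [pow_succ', ih, Finset.sum_mul_sum, ← (Fin.consEquiv fun _ => ι).sum_comp,
      Fintype.sum_prod_type]
    simp [Fin.consEquiv, List.ofFn_succ]

theorem List.prod_map_mul_of_commute {M : Type*} [Monoid M] {ι : Type*} {u v : ι → M}
    (h : ∀ i j, Commute (v i) (u j)) (l : List ι) :
    (l.map fun i => u i * v i).prod = (l.map u).prod * (l.map v).prod := by
  induction l with
  | nil => simp
  | cons i l ih =>
    have hv : Commute (v i) (l.map u).prod :=
      Commute.list_prod_right _ _ (by simpa using fun j _ => h i j)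
    simp only [List.map_cons, List.prod_cons, ih, hv.mul_mul_mul_comm]

open scoped IsMulCommutative in
theorem List.prod_map_eq_zero_of_monomial_eq_zero {M₀ : Type*} [MonoidWithZero M₀] {d n : ℕ}
    {a : Fin d → M₀} (hcomm : ∀ i j, Commute (a i) (a j))
    (hmon : ∀ α : Fin d → ℕ, ∑ i, α i = n → (List.ofFn fun i => a i ^ α i).prod = 0)
    {w : List (Fin d)} (hw : w.length = n) : (w.map a).prod = 0 := by
  classical
  -- Reorder the word inside the commutative submonoid generated by the entries of `a`.
  let S := Submonoid.closure (Set.range a)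
  have : IsMulCommutative S := Submonoid.isMulCommutative_closure _
    (by rintro _ ⟨i, rfl⟩ _ ⟨j, rfl⟩; exact hcomm i j)
  let b : Fin d → S := fun i => ⟨a i, Submonoid.subset_closure ⟨i, rfl⟩⟩
  have hcount : ∑ i, w.count i = n := by
    rw [← hw, ← List.sum_toFinset_count_eq_length]
    exact (Finset.sum_subset (Finset.subset_univ _) fun i _ hi =>
      List.count_eq_zero_of_not_mem (mt List.mem_toFinset.2 hi)).symm
  have hb : (w.map b).prod = ∏ i, b i ^ w.count i := by
    rw [Finset.prod_list_map_count]
    exact Finset.prod_subset (Finset.subset_univ _) fun i _ hi => by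
      rw [List.count_eq_zero_of_not_mem (mt List.mem_toFinset.2 hi), pow_zero]
  have := congrArg (fun s : S => (s : M₀)) hb
  simp only [← List.prod_ofFn, Submonoid.coe_list_prod, List.map_ofFn, List.map_map] at this
  rw [← hmon _ hcount]
  exact this

theorem Commute.add_pow_smul_eq_zero {R M : Type*} [Semiring R] [AddCommMonoid M] [Module R M]
    {a u : R} (h : Commute a u) {x : M} {m k p : ℕ} (hx : a ^ m • x = 0) (hu : u ^ k = 0)
    (hp : m + k ≤ p + 1) : (a + u) ^ p • x = 0 := by
  rw [h.add_pow', Finset.sum_smul]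
  refine Finset.sum_eq_zero fun ⟨i, j⟩ hij => ?_
  rw [Finset.HasAntidiagonal.mem_antidiagonal] at hij
  rw [smul_assoc]
  by_cases hi : m ≤ i
  · rw [(h.pow_pow i j).eq, mul_smul, ← Nat.sub_add_cancel hi, pow_add, mul_smul, hx, smul_zero,
      smul_zero, smul_zero]
  · rw [pow_eq_zero_of_le (by omega) hu, mul_zero, zero_smul, smul_zero]

section ElementaryOperator

variable (K : Type*) {R : Type*} [CommSemiring K] [Semiring R] [Algebra K R]

theorem List.prod_map_mulLeft {ι : Type*} (a : ι → R) (l : List ι) :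
    (l.map fun i => mulLeft K (a i)).prod = mulLeft K (l.map a).prod := by
  induction l with
  | nil => ext; simp
  | cons i l ih =>
    rw [List.map_cons, List.prod_cons, ih, List.map_cons, List.prod_cons, mulLeft_mul]
    rfl

theorem List.prod_map_mulRight {ι : Type*} (b : ι → R) (l : List ι) :
    (l.map fun i => mulRight K (b i)).prod = mulRight K (l.reverse.map b).prod := by
  induction l with
  | nil => ext; simp
  | cons i l ih =>
    rw [List.map_cons, List.prod_cons, ih, List.reverse_cons, List.map_append, List.prod_append,
      List.map_singleton, List.prod_singleton, mulRight_mul]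
    rfl

variable {ι : Type*} [Fintype ι]

def elementaryOp (a b : ι → R) : Module.End K R :=
  ∑ i, mulLeft K (a i) * mulRight K (b i)

variable {K}

@[simp]
theorem elementaryOp_apply (a b : ι → R) (x : R) :
    elementaryOp K a b x = ∑ i, a i * x * b i := by
  simp [elementaryOp, mul_assoc]

theorem elementaryOp_add_left (a c b : ι → R) :
    elementaryOp K (fun i => a i + c i) b = elementaryOp K a b + elementaryOp K c b := by
  ext x; simp [add_mul, Finset.sum_add_distrib]

theorem elementaryOp_add_right (a b e : ι → R) :
    elementaryOp K a (fun i => b i + e i) = elementaryOp K a b + elementaryOp K a e := by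
  ext x; simp [mul_add, Finset.sum_add_distrib]

theorem commute_elementaryOp {a b c e : ι → R} (hac : ∀ i j, Commute (a i) (c j))
    (hbe : ∀ i j, Commute (b i) (e j)) : Commute (elementaryOp K a b) (elementaryOp K c e) := by
  refine Commute.sum_left _ _ _ fun i _ => Commute.sum_right _ _ _ fun j _ => ?_
  have hL : Commute (mulLeft K (a i)) (mulLeft K (c j)) := (hac i j).map (Algebra.lmul K R)
  have hR : Commute (mulRight K (b i)) (mulRight K (e j)) :=
    LinearMap.ext fun x => by simp [mul_assoc, (hbe i j).eq]
  exact (hL.mul_right (commute_mulLeft_right _ _)).mul_left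
    ((commute_mulLeft_right _ _).symm.mul_right hR)

variable {d n : ℕ}

theorem elementaryOp_pow_eq_zero_of_left {a : Fin d → R} (b : Fin d → R)
    (hcomm : ∀ i j, Commute (a i) (a j))
    (hmon : ∀ α : Fin d → ℕ, ∑ i, α i = n → (List.ofFn fun i => a i ^ α i).prod = 0) :
    elementaryOp K a b ^ n = 0 := by
  rw [elementaryOp, Finset.sum_pow_eq_sum_prod_map_ofFn]
  refine Finset.sum_eq_zero fun f _ => ?_
  rw [List.prod_map_mul_of_commute fun i j => (commute_mulLeft_right (a j) (b i)).symm,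
    List.prod_map_mulLeft, List.prod_map_eq_zero_of_monomial_eq_zero hcomm hmon List.length_ofFn,
    mulLeft_zero_eq_zero, zero_mul]

theorem elementaryOp_pow_eq_zero_of_right (a : Fin d → R) {b : Fin d → R}
    (hcomm : ∀ i j, Commute (b i) (b j))
    (hmon : ∀ α : Fin d → ℕ, ∑ i, α i = n → (List.ofFn fun i => b i ^ α i).prod = 0) :
    elementaryOp K a b ^ n = 0 := by
  rw [elementaryOp, Finset.sum_pow_eq_sum_prod_map_ofFn]
  refine Finset.sum_eq_zero fun f _ => ?_
  rw [List.prod_map_mul_of_commute fun i j => (commute_mulLeft_right (a j) (b i)).symm,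
    List.prod_map_mulRight, List.prod_map_eq_zero_of_monomial_eq_zero hcomm hmon (by simp),
    mulRight_zero_eq_zero, mul_zero]

end ElementaryOperator

section DeltaOp

variable {E : Type*} [NormedAddCommGroup E] [NormedSpace ℂ E] {d : ℕ}

theorem deltaOp_eq_one_sub_elementaryOp (A B : Fin d → (E →L[ℂ] E)) :
    DeltaOp A B = ⇑(1 - elementaryOp ℂ A B) := by
  ext1 Y
  simp [DeltaOp]

theorem iterate_deltaOp (A B : Fin d → (E →L[ℂ] E)) (k : ℕ) :
    (DeltaOp A B)^[k] = ⇑((1 - elementaryOp ℂ A B) ^ k) := by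
  rw [deltaOp_eq_one_sub_elementaryOp, Module.End.coe_pow]

end DeltaOp

theorem stmt15_general {E : Type*} [NormedAddCommGroup E] [NormedSpace ℂ E]
    {d : ℕ} (A B N₁ N₂ : Fin d → (E →L[ℂ] E))
    (hA : ∀ i j, A i * A j = A j * A i) (hB : ∀ i j, B i * B j = B j * B i)
    (hN₁ : ∀ i j, N₁ i * N₁ j = N₁ j * N₁ i) (hN₂ : ∀ i j, N₂ i * N₂ j = N₂ j * N₂ i)
    (m n₁ n₂ : ℕ) (hn₁ : 0 < n₁)
    (hnil₁ : IsNilpotentTuple N₁ n₁) (hnil₂ : IsNilpotentTuple N₂ n₂)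
    (hAN : ∀ i j, A i * N₁ j = N₁ j * A i) (hBN : ∀ i j, B i * N₂ j = N₂ j * B i)
    (X : E →L[ℂ] E) (h : (DeltaOp A B)^[m] X = 0) :
    (DeltaOp (fun i => A i + N₁ i) (fun i => B i + N₂ i))^[m + n₁ + n₂ - 2] X = 0 := by
  have hsplit : 1 - elementaryOp ℂ (fun i => A i + N₁ i) (fun i => B i + N₂ i) =
      (1 - elementaryOp ℂ A B) +
        -(elementaryOp ℂ N₁ (fun i => B i + N₂ i) + elementaryOp ℂ A N₂) := by
    rw [elementaryOp_add_left, elementaryOp_add_right]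
    abel
  set D := 1 - elementaryOp ℂ A B
  set P := elementaryOp ℂ N₁ fun i => B i + N₂ i
  set Q := elementaryOp ℂ A N₂
  have hB_BN₂ : ∀ i j, Commute (B i) (B j + N₂ j) := fun i j =>
    Commute.add_right (hB i j) (hBN i j)
  have hDP : Commute D P := (Commute.one_left _).sub_left (commute_elementaryOp hAN hB_BN₂)
  have hDQ : Commute D Q := (Commute.one_left _).sub_left (commute_elementaryOp hA hBN)
  have hPQ : Commute P Q :=
    commute_elementaryOp (fun i j => (hAN j i).symm) fun i j =>
      Commute.add_left (hBN i j) (hN₂ i j)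
  have hP : P ^ n₁ = 0 := elementaryOp_pow_eq_zero_of_left _ hN₁ hnil₁
  have hQ : Q ^ n₂ = 0 := elementaryOp_pow_eq_zero_of_right _ hN₂ hnil₂
  have hPQ_nil : (-(P + Q)) ^ (n₁ + n₂ - 1) = 0 := by
    rw [neg_pow (P + Q), hPQ.add_pow_add_eq_zero_of_pow_eq_zero hP hQ, mul_zero]
  rw [iterate_deltaOp] at h
  rw [iterate_deltaOp, hsplit]
  exact (hDP.add_right hDQ).neg_right.add_pow_smul_eq_zero h hPQ_nil (by omega)

theorem stmt15 {E : Type*} [NormedAddCommGroup E] [NormedSpace ℂ E] [CompleteSpace E]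
    {d : ℕ} (A B N₁ N₂ : Fin d → (E →L[ℂ] E))
    (hA : ∀ i j, A i * A j = A j * A i) (hB : ∀ i j, B i * B j = B j * B i)
    (hN₁ : ∀ i j, N₁ i * N₁ j = N₁ j * N₁ i) (hN₂ : ∀ i j, N₂ i * N₂ j = N₂ j * N₂ i)
    (m n₁ n₂ : ℕ) (hm : 0 < m) (hn₁ : 0 < n₁) (hn₂ : 0 < n₂)
    (hnil₁ : IsNilpotentTuple N₁ n₁) (hnil₂ : IsNilpotentTuple N₂ n₂)
    (hAN : ∀ i j, A i * N₁ j = N₁ j * A i) (hBN : ∀ i j, B i * N₂ j = N₂ j * B i)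
    (X : E →L[ℂ] E) (h : (DeltaOp A B)^[m] X = 0) :
    (DeltaOp (fun i => A i + N₁ i) (fun i => B i + N₂ i))^[m + n₁ + n₂ - 2] X = 0 :=
  stmt15_general A B N₁ N₂ hA hB hN₁ hN₂ m n₁ n₂ hn₁ hnil₁ hnil₂ hAN hBN X h
end

section
/- (Products, isometric case) Let A, B, S, T be commuting d-tuples of bounded operators with [A,S] = [B,S] = [B,T] = 0 componentwise. If Δ^m_{A,B}(X) = 0 and Δ^n_{S,T}(X) = 0, then Δ^{m+n−1}_{SA, TB}(X) = 0, where SA denotes the d²-tuple of all products S_j A_i and TB the d²-tuple of all T_j B_i, so that the associated elementary operator is Y ↦ Σ_{i,j} S_j A_i Y B_i T_j. -/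
noncomputable def LamOp {E : Type*} [NormedAddCommGroup E] [NormedSpace ℂ E]
    {d : ℕ} (A B : Fin d → (E →L[ℂ] E)) :
    Module.End ℂ (E →L[ℂ] E) :=
  ∑ i, (LinearMap.mulLeft ℂ (A i)).comp (LinearMap.mulRight ℂ (B i))

lemma LamOp_apply {E : Type*} [NormedAddCommGroup E] [NormedSpace ℂ E]
    {d : ℕ} (A B : Fin d → (E →L[ℂ] E)) (Y : E →L[ℂ] E) :
    LamOp A B Y = ∑ i, A i * Y * B i := by
  simp [LamOp, LinearMap.sum_apply, LinearMap.mulLeft_apply, LinearMap.mulRight_apply,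
    mul_assoc]

lemma DeltaOp_eq {E : Type*} [NormedAddCommGroup E] [NormedSpace ℂ E]
    {d : ℕ} (A B : Fin d → (E →L[ℂ] E)) :
    DeltaOp A B = ⇑(1 - LamOp A B) := by
  funext Y
  simp [DeltaOp, LamOp_apply]

theorem stmt17 {E : Type*} [NormedAddCommGroup E] [NormedSpace ℂ E] [CompleteSpace E]
    {d : ℕ} (A B S T : Fin d → (E →L[ℂ] E))
    (hA : ∀ i j, A i * A j = A j * A i) (hB : ∀ i j, B i * B j = B j * B i)
    (hS : ∀ i j, S i * S j = S j * S i) (hT : ∀ i j, T i * T j = T j * T i)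
    (hAS : ∀ i j, A i * S j = S j * A i) (hBS : ∀ i j, B i * S j = S j * B i)
    (hBT : ∀ i j, B i * T j = T j * B i)
    (X : E →L[ℂ] E) (m n : ℕ) (hm : 0 < m) (hn : 0 < n)
    (h1 : (DeltaOp A B)^[m] X = 0) (h2 : (DeltaOp S T)^[n] X = 0) :
    (fun Y => Y - ∑ j, ∑ i, S j * A i * Y * (B i * T j))^[m + n - 1] X = 0 := by
  set LA := LamOp A B with hLA
  set LS := LamOp S T with hLS
  -- commutation of the two elementary operators
  have hterm : ∀ (i j : Fin d) (Y : E →L[ℂ] E),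
      S j * (A i * Y * B i) * T j = A i * (S j * Y * T j) * B i := by
    intro i j Y
    calc S j * (A i * Y * B i) * T j
        = S j * A i * Y * (B i * T j) := by noncomm_ring
      _ = A i * S j * Y * (T j * B i) := by rw [hAS i j, hBT i j]
      _ = A i * (S j * Y * T j) * B i := by noncomm_ring
  have hcomm : LS * LA = LA * LS := by
    apply LinearMap.ext
    intro Y
    simp only [hLA, hLS, Module.End.mul_apply, LamOp_apply, Finset.mul_sum, Finset.sum_mul]
    rw [Finset.sum_comm]
    exact Finset.sum_congr rfl fun j _ => Finset.sum_congr rfl fun i _ => hterm j i Y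
  -- the product-tuple Δ as a linear endomorphism
  have key : (fun Y : E →L[ℂ] E => Y - ∑ j, ∑ i, S j * A i * Y * (B i * T j))
      = ⇑(1 - LS * LA) := by
    funext Y
    simp only [LinearMap.sub_apply, Module.End.one_apply, Module.End.mul_apply,
      hLA, hLS, LamOp_apply, Finset.mul_sum, Finset.sum_mul]
    congr 1
  set a := LS * (1 - LA) with ha
  set b := (1 - LS) with hb
  have hab : 1 - LS * LA = a + b := by rw [ha, hb, mul_sub, mul_one]; abel
  have hSA : Commute LS (1 - LA) := (Commute.one_right LS).sub_right hcomm
  have hcab : Commute a b :=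
    (Commute.one_right a).sub_right ((Commute.refl LS).mul_left hSA.symm)
  -- hypotheses in endomorphism form
  have hDA : ((1 - LA) ^ m) X = 0 := by
    rw [Module.End.pow_apply, ← DeltaOp_eq, h1]
  have hDS : (b ^ n) X = 0 := by
    rw [hb, Module.End.pow_apply, ← DeltaOp_eq, h2]
  set N := m + n - 1 with hN
  rw [key, ← Module.End.pow_apply, hab, hcab.add_pow]
  rw [LinearMap.sum_apply]
  apply Finset.sum_eq_zero
  intro k hk
  simp only [Module.End.mul_apply, Module.End.natCast_apply]
  rcases le_or_gt m k with hkm | hkm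
  · have haX : (a ^ k) X = 0 := by
      have hmul : a ^ k = LS ^ k * (1 - LA) ^ k := hSA.mul_pow k
      rw [hmul, Module.End.mul_apply]
      have h0 : ((1 - LA) ^ k) X = 0 := by
        rw [show k = (k - m) + m by omega, pow_add, Module.End.mul_apply, hDA, map_zero]
      rw [h0, map_zero]
    have hswap : ∀ Z : E →L[ℂ] E, (a ^ k) ((b ^ (N - k)) Z) = (b ^ (N - k)) ((a ^ k) Z) := by
      intro Z
      rw [← Module.End.mul_apply, ← Module.End.mul_apply, (hcab.pow_pow k (N - k)).eq]
    rw [hswap]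
    simp only [map_nsmul, haX, smul_zero, map_zero]
  · have hbX : (b ^ (N - k)) X = 0 := by
      rw [show N - k = (N - k - n) + n by omega, pow_add, Module.End.mul_apply, hDS,
        map_zero]
    simp only [map_nsmul, hbX, smul_zero, map_zero]
end

section
/- (Tensor products) Let A, B, S, T be commuting d-tuples of bounded Hilbert space operators. If Δ^m_{A,B}(I) = 0 and Δ^n_{S,T}(I) = 0, then Δ^{m+n−1}_{A⊗S, B⊗T}(I⊗I) = 0, where A⊗S is the d²-tuple (A_i ⊗ S_j) and the elementary operator acts as Y ↦ Σ_{i,j} (A_i⊗S_j) Y (B_i⊗T_j). -/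
open TensorProduct

/-- Key algebraic lemma: if `(1-p)^m x = 0` and `(1-q)^n x = 0` for commuting
endomorphisms `p, q`, then `(1 - p*q)^(m+n-1) x = 0`. -/
lemma key_comm_pow {R M : Type*} [CommRing R] [AddCommGroup M] [Module R M]
    (p q : Module.End R M) (x : M) (hpq : Commute p q)
    (m n : ℕ) (hm : 0 < m) (hn : 0 < n)
    (hp : ((1 - p) ^ m) x = 0) (hq : ((1 - q) ^ n) x = 0) :
    ((1 - p * q) ^ (m + n - 1)) x = 0 := by
  set N := m + n - 1 with hN
  have hsplit : (1 : Module.End R M) - p * q = (1 - p) + p * (1 - q) := by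
    noncomm_ring
  have cpq' : Commute p (1 - q) := (Commute.one_right p).sub_right hpq
  have c1 : Commute (1 - p) p := (Commute.one_left p).sub_left (Commute.refl p)
  have c2 : Commute (1 - p) (1 - q) :=
    (Commute.one_left (1 - q)).sub_left cpq'
  have hc : Commute (1 - p) (p * (1 - q)) := c1.mul_right c2
  rw [hsplit, hc.add_pow' N]
  rw [LinearMap.coe_sum, Finset.sum_apply]
  apply Finset.sum_eq_zero
  rintro ⟨i, j⟩ hij
  have hij' : i + j = N := Finset.HasAntidiagonal.mem_antidiagonal.mp hij
  rw [LinearMap.smul_apply]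
  rcases le_or_gt m i with him | him
  · -- use (1-p)^m x = 0
    have key : (1 - p) ^ i * (p * (1 - q)) ^ j
        = (1 - p) ^ (i - m) * ((p * (1 - q)) ^ j * (1 - p) ^ m) := by
      conv_lhs => rw [show i = (i - m) + m from (Nat.sub_add_cancel him).symm]
      rw [pow_add, mul_assoc, (hc.pow_pow m j).eq]
    rw [key, Module.End.mul_apply, Module.End.mul_apply, hp, map_zero, map_zero, smul_zero]
  · -- i < m, so j ≥ n; use (1-q)^n x = 0
    have hjn : n ≤ j := by omega
    have key : (1 - p) ^ i * (p * (1 - q)) ^ j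
        = (1 - p) ^ i * (p ^ j * ((1 - q) ^ (j - n) * (1 - q) ^ n)) := by
      rw [cpq'.mul_pow, ← pow_add, Nat.sub_add_cancel hjn]
    rw [key, Module.End.mul_apply, Module.End.mul_apply, Module.End.mul_apply, hq,
      map_zero, map_zero, map_zero, smul_zero]

/-- Commutation of `mulLeft`s from commutation of elements. -/
lemma commute_mulLeft {R A : Type*} [CommSemiring R] [Semiring A] [Algebra R A]
    {x y : A} (h : Commute x y) :
    Commute (LinearMap.mulLeft R x) (LinearMap.mulLeft R y) := by
  apply LinearMap.ext
  intro z
  simp only [Module.End.mul_apply, LinearMap.mulLeft_apply, ← mul_assoc, h.eq]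

lemma commute_mulRight {R A : Type*} [CommSemiring R] [Semiring A] [Algebra R A]
    {x y : A} (h : Commute x y) :
    Commute (LinearMap.mulRight R x) (LinearMap.mulRight R y) := by
  apply LinearMap.ext
  intro z
  simp only [Module.End.mul_apply, LinearMap.mulRight_apply, mul_assoc, h.eq]

theorem stmt19 {H : Type*} [NormedAddCommGroup H] [InnerProductSpace ℂ H] [CompleteSpace H]
    {d : ℕ} (A B S T : Fin d → (H →L[ℂ] H))
    (hA : ∀ i j, A i * A j = A j * A i) (hB : ∀ i j, B i * B j = B j * B i)
    (hS : ∀ i j, S i * S j = S j * S i) (hT : ∀ i j, T i * T j = T j * T i)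
    (m n : ℕ) (hm : 0 < m) (hn : 0 < n)
    (h1 : (fun Y : H →L[ℂ] H => Y - ∑ i, A i * Y * B i)^[m] 1 = 0)
    (h2 : (fun Y : H →L[ℂ] H => Y - ∑ j, S j * Y * T j)^[n] 1 = 0) :
    (fun Y : H ⊗[ℂ] H →ₗ[ℂ] H ⊗[ℂ] H =>
        Y - ∑ i, ∑ j,
          (TensorProduct.map (A i : H →ₗ[ℂ] H) (S j : H →ₗ[ℂ] H)) ∘ₗ Y ∘ₗ
            (TensorProduct.map (B i : H →ₗ[ℂ] H) (T j : H →ₗ[ℂ] H)))^[m + n - 1]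
      LinearMap.id = 0 := by
  classical
  set a : Fin d → (H ⊗[ℂ] H →ₗ[ℂ] H ⊗[ℂ] H) := fun i => TensorProduct.map (A i : H →ₗ[ℂ] H) (LinearMap.id) with ha
  set b : Fin d → (H ⊗[ℂ] H →ₗ[ℂ] H ⊗[ℂ] H) := fun i => TensorProduct.map (B i : H →ₗ[ℂ] H) (LinearMap.id) with hb
  set s : Fin d → (H ⊗[ℂ] H →ₗ[ℂ] H ⊗[ℂ] H) := fun j => TensorProduct.map (LinearMap.id) (S j : H →ₗ[ℂ] H) with hs
  set t : Fin d → (H ⊗[ℂ] H →ₗ[ℂ] H ⊗[ℂ] H) := fun j => TensorProduct.map (LinearMap.id) (T j : H →ₗ[ℂ] H) with ht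
  -- basic composition facts
  have has : ∀ i j, a i * s j = TensorProduct.map (A i : H →ₗ[ℂ] H) (S j : H →ₗ[ℂ] H) := by
    intro i j
    show _ ∘ₗ _ = _
    rw [← TensorProduct.map_comp]
    simp
  have hsa : ∀ i j, s j * a i = TensorProduct.map (A i : H →ₗ[ℂ] H) (S j : H →ₗ[ℂ] H) := by
    intro i j
    show _ ∘ₗ _ = _
    rw [← TensorProduct.map_comp]
    simp
  have htb : ∀ i j, t j * b i = TensorProduct.map (B i : H →ₗ[ℂ] H) (T j : H →ₗ[ℂ] H) := by
    intro i j
    show _ ∘ₗ _ = _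
    rw [← TensorProduct.map_comp]
    simp
  have hbt : ∀ i j, b i * t j = TensorProduct.map (B i : H →ₗ[ℂ] H) (T j : H →ₗ[ℂ] H) := by
    intro i j
    show _ ∘ₗ _ = _
    rw [← TensorProduct.map_comp]
    simp
  set p : Module.End ℂ (H ⊗[ℂ] H →ₗ[ℂ] H ⊗[ℂ] H) := ∑ i, LinearMap.mulLeft ℂ (a i) * LinearMap.mulRight ℂ (b i) with hp
  set q : Module.End ℂ (H ⊗[ℂ] H →ₗ[ℂ] H ⊗[ℂ] H) := ∑ j, LinearMap.mulLeft ℂ (s j) * LinearMap.mulRight ℂ (t j) with hq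
  -- the function in the goal is 1 - p * q
  have hPQ : ∀ Y : H ⊗[ℂ] H →ₗ[ℂ] H ⊗[ℂ] H, (p * q) Y = ∑ i, ∑ j,
      (TensorProduct.map (A i : H →ₗ[ℂ] H) (S j : H →ₗ[ℂ] H)) ∘ₗ Y ∘ₗ
        (TensorProduct.map (B i : H →ₗ[ℂ] H) (T j : H →ₗ[ℂ] H)) := by
    intro Y
    simp only [Module.End.mul_apply, hp, hq, LinearMap.sum_apply, map_sum,
      LinearMap.mulLeft_apply, LinearMap.mulRight_apply]
    rw [Finset.sum_comm]
    apply Finset.sum_congr rfl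
    intro i _
    apply Finset.sum_congr rfl
    intro j _
    rw [← has i j, ← htb i j]
    show a i * (s j * (Y * t j) * b i) = (a i * s j) ∘ₗ Y ∘ₗ (t j * b i)
    show a i * (s j * (Y * t j) * b i) = (a i * s j) * (Y * (t j * b i))
    simp [mul_assoc]
  have hfun : (fun Y : H ⊗[ℂ] H →ₗ[ℂ] H ⊗[ℂ] H =>
        Y - ∑ i, ∑ j,
          (TensorProduct.map (A i : H →ₗ[ℂ] H) (S j : H →ₗ[ℂ] H)) ∘ₗ Y ∘ₗ
            (TensorProduct.map (B i : H →ₗ[ℂ] H) (T j : H →ₗ[ℂ] H)))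
      = ⇑((1 : Module.End ℂ (H ⊗[ℂ] H →ₗ[ℂ] H ⊗[ℂ] H)) - p * q) := by
    funext Y
    rw [LinearMap.sub_apply, Module.End.one_apply, hPQ]
  rw [hfun, ← Module.End.pow_apply]
  -- hypotheses in endomorphism form
  set φ : Module.End ℂ (H →L[ℂ] H) := ∑ i, LinearMap.mulLeft ℂ (A i) * LinearMap.mulRight ℂ (B i) with hφ
  set ψ : Module.End ℂ (H →L[ℂ] H) := ∑ j, LinearMap.mulLeft ℂ (S j) * LinearMap.mulRight ℂ (T j) with hψ
  have hfun1 : (fun Y : H →L[ℂ] H => Y - ∑ i, A i * Y * B i)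
      = ⇑((1 : Module.End ℂ (H →L[ℂ] H)) - φ) := by
    funext Y
    simp [hφ, LinearMap.sub_apply, LinearMap.sum_apply, Module.End.mul_apply, mul_assoc]
  have hfun2 : (fun Y : H →L[ℂ] H => Y - ∑ j, S j * Y * T j)
      = ⇑((1 : Module.End ℂ (H →L[ℂ] H)) - ψ) := by
    funext Y
    simp [hψ, LinearMap.sub_apply, LinearMap.sum_apply, Module.End.mul_apply, mul_assoc]
  rw [hfun1, ← Module.End.pow_apply] at h1
  rw [hfun2, ← Module.End.pow_apply] at h2
  -- commutation of p and q
  have hcomm : Commute p q := by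
    rw [hp, hq]
    refine Commute.sum_left _ _ _ (fun i _ => Commute.sum_right _ _ _ (fun j _ => ?_))
    have cas : Commute (a i) (s j) := by
      show a i * s j = s j * a i
      rw [has, hsa]
    have cbt : Commute (b i) (t j) := by
      show b i * t j = t j * b i
      rw [hbt, htb]
    have c1 : Commute (LinearMap.mulLeft ℂ (a i)) (LinearMap.mulLeft ℂ (s j)) :=
      commute_mulLeft cas
    have c2 : Commute (LinearMap.mulRight ℂ (b i)) (LinearMap.mulRight ℂ (t j)) :=
      commute_mulRight cbt
    exact (c1.mul_right (LinearMap.commute_mulLeft_right (a i) (t j))).mul_left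
      (((LinearMap.commute_mulLeft_right (s j) (b i)).symm).mul_right c2)
  -- linearity of `map · id` and `map id ·`
  have hmapr_sub : ∀ f g : H →ₗ[ℂ] H,
      TensorProduct.map (f - g) (LinearMap.id : H →ₗ[ℂ] H)
        = TensorProduct.map f LinearMap.id - TensorProduct.map g LinearMap.id := by
    intro f g
    apply TensorProduct.ext'
    intro x y
    simp [TensorProduct.sub_tmul]
  have hmapr_sum : ∀ f : Fin d → (H →ₗ[ℂ] H),
      TensorProduct.map (∑ i, f i) (LinearMap.id : H →ₗ[ℂ] H)
        = ∑ i, TensorProduct.map (f i) LinearMap.id := by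
    intro f
    apply TensorProduct.ext'
    intro x y
    simp [TensorProduct.sum_tmul]
  have hmapl_sub : ∀ f g : H →ₗ[ℂ] H,
      TensorProduct.map (LinearMap.id : H →ₗ[ℂ] H) (f - g)
        = TensorProduct.map LinearMap.id f - TensorProduct.map LinearMap.id g := by
    intro f g
    apply TensorProduct.ext'
    intro x y
    simp [TensorProduct.tmul_sub]
  have hmapl_sum : ∀ f : Fin d → (H →ₗ[ℂ] H),
      TensorProduct.map (LinearMap.id : H →ₗ[ℂ] H) (∑ i, f i)
        = ∑ i, TensorProduct.map LinearMap.id (f i) := by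
    intro f
    apply TensorProduct.ext'
    intro x y
    simp [TensorProduct.tmul_sum]
  -- invariants
  have hinv1 : ∀ k : ℕ, ((1 - p) ^ k) LinearMap.id
      = TensorProduct.map ((((1 - φ) ^ k) 1 : H →L[ℂ] H) : H →ₗ[ℂ] H) LinearMap.id := by
    intro k
    induction k with
    | zero =>
      apply TensorProduct.ext'
      intro x y
      simp
    | succ k ih =>
      rw [pow_succ', Module.End.mul_apply, ih, pow_succ', Module.End.mul_apply]
      set x : H →L[ℂ] H := ((1 - φ) ^ k) 1 with hx
      clear_value x
      have hco : (((1 - φ) x : H →L[ℂ] H) : H →ₗ[ℂ] H)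
          = (x : H →ₗ[ℂ] H) - ∑ i, (A i : H →ₗ[ℂ] H) ∘ₗ ((x : H →ₗ[ℂ] H) ∘ₗ (B i : H →ₗ[ℂ] H)) := by
        simp only [hφ, LinearMap.sub_apply, Module.End.one_apply, LinearMap.sum_apply,
          Module.End.mul_apply, LinearMap.mulLeft_apply, LinearMap.mulRight_apply,
          ContinuousLinearMap.coe_sub]
        congr 1
        have hcs : ((∑ i, A i * (x * B i) : H →L[ℂ] H) : H →ₗ[ℂ] H)
            = ∑ i, ((A i * (x * B i) : H →L[ℂ] H) : H →ₗ[ℂ] H) :=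
          map_sum (ContinuousLinearMap.coeLM ℂ) _ _
        rw [hcs]
        exact Finset.sum_congr rfl fun i _ => rfl
      rw [hco, hmapr_sub, hmapr_sum]
      simp only [LinearMap.sub_apply, Module.End.one_apply, hp, LinearMap.sum_apply,
        Module.End.mul_apply, LinearMap.mulLeft_apply, LinearMap.mulRight_apply]
      congr 1
      apply Finset.sum_congr rfl
      intro i _
      apply TensorProduct.ext'
      intro u v
      have h3 : ∀ (f g h : H ⊗[ℂ] H →ₗ[ℂ] H ⊗[ℂ] H) (z : H ⊗[ℂ] H), (f * (g * h)) z = f (g (h z)) := fun _ _ _ _ => rfl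
      rw [h3]
      simp [ha, hb]
  have hinv2 : ∀ k : ℕ, ((1 - q) ^ k) LinearMap.id
      = TensorProduct.map LinearMap.id ((((1 - ψ) ^ k) 1 : H →L[ℂ] H) : H →ₗ[ℂ] H) := by
    intro k
    induction k with
    | zero =>
      apply TensorProduct.ext'
      intro x y
      simp
    | succ k ih =>
      rw [pow_succ', Module.End.mul_apply, ih, pow_succ', Module.End.mul_apply]
      set x : H →L[ℂ] H := ((1 - ψ) ^ k) 1 with hx
      clear_value x
      have hco : (((1 - ψ) x : H →L[ℂ] H) : H →ₗ[ℂ] H)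
          = (x : H →ₗ[ℂ] H) - ∑ j, (S j : H →ₗ[ℂ] H) ∘ₗ ((x : H →ₗ[ℂ] H) ∘ₗ (T j : H →ₗ[ℂ] H)) := by
        simp only [hψ, LinearMap.sub_apply, Module.End.one_apply, LinearMap.sum_apply,
          Module.End.mul_apply, LinearMap.mulLeft_apply, LinearMap.mulRight_apply,
          ContinuousLinearMap.coe_sub]
        congr 1
        have hcs : ((∑ j, S j * (x * T j) : H →L[ℂ] H) : H →ₗ[ℂ] H)
            = ∑ j, ((S j * (x * T j) : H →L[ℂ] H) : H →ₗ[ℂ] H) :=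
          map_sum (ContinuousLinearMap.coeLM ℂ) _ _
        rw [hcs]
        exact Finset.sum_congr rfl fun i _ => rfl
      rw [hco, hmapl_sub, hmapl_sum]
      simp only [LinearMap.sub_apply, Module.End.one_apply, hq, LinearMap.sum_apply,
        Module.End.mul_apply, LinearMap.mulLeft_apply, LinearMap.mulRight_apply]
      congr 1
      apply Finset.sum_congr rfl
      intro j _
      apply TensorProduct.ext'
      intro u v
      have h3 : ∀ (f g h : H ⊗[ℂ] H →ₗ[ℂ] H ⊗[ℂ] H) (z : H ⊗[ℂ] H), (f * (g * h)) z = f (g (h z)) := fun _ _ _ _ => rfl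
      rw [h3]
      simp [hs, ht]
  have hp0 : ((1 - p) ^ m) LinearMap.id = 0 := by
    rw [hinv1, h1]
    apply TensorProduct.ext'
    intro x y
    simp
  have hq0 : ((1 - q) ^ n) LinearMap.id = 0 := by
    rw [hinv2, h2]
    apply TensorProduct.ext'
    intro x y
    simp
  exact key_comm_pow p q LinearMap.id hcomm m n hm hn hp0 hq0
end
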